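/- arXiv:2002.09953 — 2 statements merged into one kernel-verified Lean document; each statement's English description precedes it below -/
import Mathlib

section
/- Let f^t be a family of mean-zero L² functions on the torus with ‖f^t‖_{H^{-q}} > 0 for all t > 0, and suppose f^t is q-transient: for every finite set I of nonzero modes, limsup_{t→∞} ‖P_I f^t‖_{H^{-q}}/‖f^t‖_{H^{-q}} = 0. Then for every g ∈ H^q, ⟨f^t, g⟩ = o(‖f^t‖_{H^{-q}}) as t → ∞, i.e., |⟨f^t, g⟩|/‖f^t‖_{H^{-q}} → 0. -/
open Filter

/-- Euclidean magnitude of a lattice mode `k ∈ ℤ^d`. -/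
noncomputable def wt {d : ℕ} (k : Fin d → ℤ) : ℝ :=
  Real.sqrt (∑ i, ((k i : ℝ)) ^ 2)

/-- Squared homogeneous Sobolev norm `‖f‖_{H^α}² = Σ_{k≠0} |k|^{2α} |f_k|²`,
    for `f` given by its Fourier coefficients. -/
noncomputable def sobNormSq {d : ℕ} (α : ℝ) (f : (Fin d → ℤ) → ℂ) : ℝ :=
  ∑' k : {k : Fin d → ℤ // k ≠ 0}, wt k.1 ^ (2 * α) * ‖f k.1‖ ^ 2

/-- Plancherel pairing `⟨f,g⟩ = Σ_k f_k conj(g_k)`. -/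
noncomputable def pairing {d : ℕ} (f g : (Fin d → ℤ) → ℂ) : ℂ :=
  ∑' k : Fin d → ℤ, f k * (starRingEnd ℂ) (g k)

/-- Mean-zero: vanishing zeroth Fourier coefficient. -/
def meanZero {d : ℕ} (f : (Fin d → ℤ) → ℂ) : Prop := f 0 = 0

/-- Membership in the homogeneous Sobolev space `H^α` (Fourier side). -/
def memSob {d : ℕ} (α : ℝ) (g : (Fin d → ℤ) → ℂ) : Prop :=
  g 0 = 0 ∧ Summable (fun k : {k : Fin d → ℤ // k ≠ 0} => wt k.1 ^ (2 * α) * ‖g k.1‖ ^ 2)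

/-- Squared `H^α` norm of the projection `P_I f` onto the modes in `I`. -/
noncomputable def projNormSq {d : ℕ} (α : ℝ) (I : Finset (Fin d → ℤ))
    (f : (Fin d → ℤ) → ℂ) : ℝ :=
  ∑ k ∈ I, wt k ^ (2 * α) * ‖f k‖ ^ 2

lemma wt_nonneg {d : ℕ} (k : Fin d → ℤ) : 0 ≤ wt k := Real.sqrt_nonneg _

lemma one_le_wt {d : ℕ} {k : Fin d → ℤ} (hk : k ≠ 0) : 1 ≤ wt k := by
  obtain ⟨i, hi⟩ : ∃ i, k i ≠ 0 := by
    by_contra h; push_neg at h; exact hk (funext h)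
  have h1 : (1 : ℝ) ≤ ((k i : ℝ)) ^ 2 := by
    have h2 : (1 : ℤ) ≤ (k i) ^ 2 := by
      nlinarith [Int.one_le_abs hi, sq_abs (k i), abs_nonneg (k i)]
    exact_mod_cast h2
  have h3 : (1 : ℝ) ≤ ∑ j, ((k j : ℝ)) ^ 2 :=
    h1.trans (Finset.single_le_sum (f := fun j => ((k j : ℝ)) ^ 2)
      (fun j _ => sq_nonneg _) (Finset.mem_univ i))
  calc (1 : ℝ) = Real.sqrt 1 := Real.sqrt_one.symm
    _ ≤ wt k := Real.sqrt_le_sqrt h3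

lemma wt_pos {d : ℕ} {k : Fin d → ℤ} (hk : k ≠ 0) : 0 < wt k :=
  zero_lt_one.trans_le (one_le_wt hk)

lemma rpow_sq {x : ℝ} (hx : 0 ≤ x) (a : ℝ) : (x ^ a) ^ 2 = x ^ (2 * a) := by
  rw [← Real.rpow_natCast (x ^ a) 2, ← Real.rpow_mul hx]
  norm_num [mul_comm]

lemma tsum_mul_le_sqrt {ι : Type*} (a b : ι → ℝ) (ha : ∀ i, 0 ≤ a i) (hb : ∀ i, 0 ≤ b i)
    (h2a : Summable fun i => a i ^ 2) (h2b : Summable fun i => b i ^ 2) :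
    ∑' i, a i * b i ≤ Real.sqrt (∑' i, a i ^ 2) * Real.sqrt (∑' i, b i ^ 2) := by
  have hab : Summable fun i => a i * b i :=
    Summable.of_nonneg_of_le (fun i => mul_nonneg (ha i) (hb i))
      (fun i => by nlinarith [sq_nonneg (a i - b i)]) (h2a.add h2b)
  refine Summable.tsum_le_of_sum_le hab fun s => ?_
  have h1 : (∑ i ∈ s, a i * b i) ^ 2 ≤ (∑ i ∈ s, a i ^ 2) * ∑ i ∈ s, b i ^ 2 :=
    Finset.sum_mul_sq_le_sq_mul_sq s a b
  have h2 : (∑ i ∈ s, a i ^ 2) ≤ ∑' i, a i ^ 2 := Summable.sum_le_tsum s (fun i _ => sq_nonneg _) h2a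
  have h3 : (∑ i ∈ s, b i ^ 2) ≤ ∑' i, b i ^ 2 := Summable.sum_le_tsum s (fun i _ => sq_nonneg _) h2b
  have hs : 0 ≤ ∑ i ∈ s, a i * b i := Finset.sum_nonneg fun i _ => mul_nonneg (ha i) (hb i)
  calc ∑ i ∈ s, a i * b i = Real.sqrt ((∑ i ∈ s, a i * b i) ^ 2) := (Real.sqrt_sq hs).symm
    _ ≤ Real.sqrt ((∑' i, a i ^ 2) * ∑' i, b i ^ 2) := Real.sqrt_le_sqrt
        (h1.trans (mul_le_mul h2 h3 (Finset.sum_nonneg fun i _ => sq_nonneg _)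
          (tsum_nonneg fun i => sq_nonneg _)))
    _ = _ := Real.sqrt_mul (tsum_nonneg fun i => sq_nonneg _) _

noncomputable def tailSq {d : ℕ} (q : ℝ) (g : (Fin d → ℤ) → ℂ)
    (J : Finset {k : Fin d → ℤ // k ≠ 0}) : ℝ :=
  ∑' k : {x : {k : Fin d → ℤ // k ≠ 0} // x ∉ J}, wt k.1.1 ^ (2 * q) * ‖g k.1.1‖ ^ 2

-- summability of the weighted f-sequence (negative exponent)
lemma Fq_summable {d : ℕ} {q : ℝ} (hq : 0 < q) {f : (Fin d → ℤ) → ℂ}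
    (hfL2 : Summable fun k => ‖f k‖ ^ 2) :
    Summable (fun k : {k : Fin d → ℤ // k ≠ 0} => wt k.1 ^ (2 * (-q)) * ‖f k.1‖ ^ 2) := by
  refine Summable.of_nonneg_of_le (fun k => ?_) (fun k => ?_)
    (hfL2.subtype {k : Fin d → ℤ | k ≠ 0})
  · exact mul_nonneg (Real.rpow_nonneg (wt_nonneg _) _) (sq_nonneg _)
  · have h1 : wt k.1 ^ (2 * (-q)) ≤ 1 :=
      Real.rpow_le_one_of_one_le_of_nonpos (one_le_wt k.2) (by linarith)
    calc wt k.1 ^ (2 * (-q)) * ‖f k.1‖ ^ 2 ≤ 1 * ‖f k.1‖ ^ 2 :=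
          mul_le_mul_of_nonneg_right h1 (sq_nonneg _)
      _ = ‖f k.1‖ ^ 2 := one_mul _

lemma gL2 {d : ℕ} {q : ℝ} (hq : 0 < q) {g : (Fin d → ℤ) → ℂ} (hg : memSob q g) :
    Summable (fun k : {k : Fin d → ℤ // k ≠ 0} => ‖g k.1‖ ^ 2) := by
  refine Summable.of_nonneg_of_le (fun k => sq_nonneg _) (fun k => ?_) hg.2
  have h1 : (1 : ℝ) ≤ wt k.1 ^ (2 * q) := by
    calc (1 : ℝ) = (1 : ℝ) ^ (2 * q) := (Real.one_rpow _).symm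
      _ ≤ wt k.1 ^ (2 * q) := Real.rpow_le_rpow zero_le_one (one_le_wt k.2) (by linarith)
  nlinarith [sq_nonneg ‖g k.1‖]

lemma key {d : ℕ} {q : ℝ} (hq : 0 < q) {f g : (Fin d → ℤ) → ℂ}
    (hf0 : f 0 = 0) (hfL2 : Summable fun k => ‖f k‖ ^ 2) (hg : memSob q g)
    (J : Finset {k : Fin d → ℤ // k ≠ 0}) :
    ‖pairing f g‖ ≤
      Real.sqrt (projNormSq (-q) (J.image Subtype.val) f) * Real.sqrt (sobNormSq q g)
        + Real.sqrt (sobNormSq (-q) f) * Real.sqrt (tailSq q g J) := by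
  have hFq := Fq_summable hq hfL2
  have hgL2 := gL2 hq hg
  have hfL2' := hfL2.subtype {k : Fin d → ℤ | k ≠ 0}
  -- summability of products of norms over nonzero modes
  have hnormsum : Summable (fun k : {k : Fin d → ℤ // k ≠ 0} => ‖f k.1‖ * ‖g k.1‖) :=
    Summable.of_nonneg_of_le (fun k => mul_nonneg (norm_nonneg _) (norm_nonneg _))
      (fun k => by
        show ‖f k.1‖ * ‖g k.1‖ ≤ ‖f k.1‖ ^ 2 + ‖g k.1‖ ^ 2
        nlinarith [sq_nonneg (‖f k.1‖ - ‖g k.1‖)])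
      (hfL2'.add hgL2)
  -- step 1 : bound the pairing by the tsum of products of norms
  have hpair : ‖pairing f g‖ ≤ ∑' k : {k : Fin d → ℤ // k ≠ 0}, ‖f k.1‖ * ‖g k.1‖ := by
    have hsupp : Function.support (fun k : Fin d → ℤ => f k * (starRingEnd ℂ) (g k))
        ⊆ {k : Fin d → ℤ | k ≠ 0} := by
      intro k hk
      simp only [Function.mem_support] at hk
      simp only [Set.mem_setOf_eq]
      intro h0
      exact hk (by rw [h0, hf0, zero_mul])
    have heq : pairing f g = ∑' k : {k : Fin d → ℤ // k ≠ 0}, f k.1 * (starRingEnd ℂ) (g k.1) :=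
      (tsum_subtype_eq_of_support_subset hsupp).symm
    rw [heq]
    calc ‖∑' k : {k : Fin d → ℤ // k ≠ 0}, f k.1 * (starRingEnd ℂ) (g k.1)‖
        ≤ ∑' k : {k : Fin d → ℤ // k ≠ 0}, ‖f k.1 * (starRingEnd ℂ) (g k.1)‖ := by
          apply norm_tsum_le_tsum_norm
          simpa [norm_mul] using hnormsum
      _ = ∑' k : {k : Fin d → ℤ // k ≠ 0}, ‖f k.1‖ * ‖g k.1‖ := by
          congr 1; funext k; simp [norm_mul]
  -- step 2 : split the tsum
  have hsplit := Summable.sum_add_tsum_compl (s := J) hnormsum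
  -- step 3 : finset part
  have hfin : ∑ k ∈ J, ‖f k.1‖ * ‖g k.1‖ ≤
      Real.sqrt (projNormSq (-q) (J.image Subtype.val) f) * Real.sqrt (sobNormSq q g) := by
    have hre : ∀ k : {k : Fin d → ℤ // k ≠ 0},
        ‖f k.1‖ * ‖g k.1‖ = (wt k.1 ^ (-q) * ‖f k.1‖) * (wt k.1 ^ q * ‖g k.1‖) := by
      intro k
      have h1 : wt k.1 ^ (-q) * wt k.1 ^ q = 1 := by
        rw [← Real.rpow_add (wt_pos k.2), neg_add_cancel, Real.rpow_zero]
      calc ‖f k.1‖ * ‖g k.1‖ = (wt k.1 ^ (-q) * wt k.1 ^ q) * (‖f k.1‖ * ‖g k.1‖) := by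
            rw [h1, one_mul]
        _ = (wt k.1 ^ (-q) * ‖f k.1‖) * (wt k.1 ^ q * ‖g k.1‖) := by ring
    calc ∑ k ∈ J, ‖f k.1‖ * ‖g k.1‖
        = ∑ k ∈ J, (wt k.1 ^ (-q) * ‖f k.1‖) * (wt k.1 ^ q * ‖g k.1‖) := by
          refine Finset.sum_congr rfl fun k _ => hre k
      _ ≤ Real.sqrt (∑ k ∈ J, (wt k.1 ^ (-q) * ‖f k.1‖) ^ 2) *
            Real.sqrt (∑ k ∈ J, (wt k.1 ^ q * ‖g k.1‖) ^ 2) :=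
          Real.sum_mul_le_sqrt_mul_sqrt _ _ _
      _ ≤ Real.sqrt (projNormSq (-q) (J.image Subtype.val) f) * Real.sqrt (sobNormSq q g) := by
          apply mul_le_mul
          · apply Real.sqrt_le_sqrt
            have : ∑ k ∈ J, (wt k.1 ^ (-q) * ‖f k.1‖) ^ 2
                = ∑ k ∈ J, wt k.1 ^ (2 * (-q)) * ‖f k.1‖ ^ 2 := by
              refine Finset.sum_congr rfl fun k _ => ?_
              rw [mul_pow, rpow_sq (wt_nonneg _)]
            rw [this, projNormSq,
              Finset.sum_image (fun x _ y _ h => Subtype.val_injective h)]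
          · apply Real.sqrt_le_sqrt
            have : ∑ k ∈ J, (wt k.1 ^ q * ‖g k.1‖) ^ 2
                = ∑ k ∈ J, wt k.1 ^ (2 * q) * ‖g k.1‖ ^ 2 := by
              refine Finset.sum_congr rfl fun k _ => ?_
              rw [mul_pow, rpow_sq (wt_nonneg _)]
            rw [this]
            exact Summable.sum_le_tsum J (fun k _ =>
              mul_nonneg (Real.rpow_nonneg (wt_nonneg _) _) (sq_nonneg _)) hg.2
          · exact Real.sqrt_nonneg _
          · exact Real.sqrt_nonneg _
  -- step 4 : tail part
  have htail : ∑' k : {x : {k : Fin d → ℤ // k ≠ 0} // x ∉ J}, ‖f k.1.1‖ * ‖g k.1.1‖ ≤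
      Real.sqrt (sobNormSq (-q) f) * Real.sqrt (tailSq q g J) := by
    have h2a : Summable (fun k : {x : {k : Fin d → ℤ // k ≠ 0} // x ∉ J} =>
        (wt k.1.1 ^ (-q) * ‖f k.1.1‖) ^ 2) := by
      have := hFq.comp_injective (Subtype.val_injective
        (p := fun x : {k : Fin d → ℤ // k ≠ 0} => x ∉ J))
      refine this.congr fun k => ?_
      rw [mul_pow, rpow_sq (wt_nonneg _)]
      rfl
    have h2b : Summable (fun k : {x : {k : Fin d → ℤ // k ≠ 0} // x ∉ J} =>
        (wt k.1.1 ^ q * ‖g k.1.1‖) ^ 2) := by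
      have := hg.2.comp_injective (Subtype.val_injective
        (p := fun x : {k : Fin d → ℤ // k ≠ 0} => x ∉ J))
      refine this.congr fun k => ?_
      rw [mul_pow, rpow_sq (wt_nonneg _)]
      rfl
    have hcs : ∑' k : {x : {k : Fin d → ℤ // k ≠ 0} // x ∉ J},
          (wt k.1.1 ^ (-q) * ‖f k.1.1‖) * (wt k.1.1 ^ q * ‖g k.1.1‖) ≤
        Real.sqrt (∑' k : {x : {k : Fin d → ℤ // k ≠ 0} // x ∉ J}, (wt k.1.1 ^ (-q) * ‖f k.1.1‖) ^ 2) *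
          Real.sqrt (∑' k : {x : {k : Fin d → ℤ // k ≠ 0} // x ∉ J}, (wt k.1.1 ^ q * ‖g k.1.1‖) ^ 2) :=
      tsum_mul_le_sqrt _ _
        (fun k => mul_nonneg (Real.rpow_nonneg (wt_nonneg _) _) (norm_nonneg _))
        (fun k => mul_nonneg (Real.rpow_nonneg (wt_nonneg _) _) (norm_nonneg _))
        h2a h2b
    have hre : ∀ k : {x : {k : Fin d → ℤ // k ≠ 0} // x ∉ J},
        ‖f k.1.1‖ * ‖g k.1.1‖ = (wt k.1.1 ^ (-q) * ‖f k.1.1‖) * (wt k.1.1 ^ q * ‖g k.1.1‖) := by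
      intro k
      have h1 : wt k.1.1 ^ (-q) * wt k.1.1 ^ q = 1 := by
        rw [← Real.rpow_add (wt_pos k.1.2), neg_add_cancel, Real.rpow_zero]
      calc ‖f k.1.1‖ * ‖g k.1.1‖
          = (wt k.1.1 ^ (-q) * wt k.1.1 ^ q) * (‖f k.1.1‖ * ‖g k.1.1‖) := by rw [h1, one_mul]
        _ = _ := by ring
    rw [tsum_congr hre]
    refine hcs.trans (mul_le_mul ?_ ?_ (Real.sqrt_nonneg _) (Real.sqrt_nonneg _))
    · apply Real.sqrt_le_sqrt
      have heq : ∑' k : {x : {k : Fin d → ℤ // k ≠ 0} // x ∉ J}, (wt k.1.1 ^ (-q) * ‖f k.1.1‖) ^ 2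
          = ∑' k : {x : {k : Fin d → ℤ // k ≠ 0} // x ∉ J}, wt k.1.1 ^ (2 * (-q)) * ‖f k.1.1‖ ^ 2 := by
        refine tsum_congr fun k => ?_
        rw [mul_pow, rpow_sq (wt_nonneg _)]
      rw [heq]
      have hsplit2 : (∑ k ∈ J, wt k.1 ^ (2 * (-q)) * ‖f k.1‖ ^ 2)
          + (∑' k : {x : {k : Fin d → ℤ // k ≠ 0} // x ∉ J}, wt k.1.1 ^ (2 * (-q)) * ‖f k.1.1‖ ^ 2)
          = ∑' k : {k : Fin d → ℤ // k ≠ 0}, wt k.1 ^ (2 * (-q)) * ‖f k.1‖ ^ 2 :=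
        Summable.sum_add_tsum_compl (s := J) hFq
      have hJnn : 0 ≤ ∑ k ∈ J, wt k.1 ^ (2 * (-q)) * ‖f k.1‖ ^ 2 :=
        Finset.sum_nonneg fun k _ =>
        mul_nonneg (Real.rpow_nonneg (wt_nonneg _) _) (sq_nonneg _)
      rw [sobNormSq]
      linarith [hsplit2]
    · apply Real.sqrt_le_sqrt
      refine le_of_eq ?_
      unfold tailSq
      refine tsum_congr fun k => ?_
      rw [mul_pow, rpow_sq (wt_nonneg _)]
  -- combine
  have hcompl_nn : 0 ≤ ∑' k : {x : {k : Fin d → ℤ // k ≠ 0} // x ∉ J}, ‖f k.1.1‖ * ‖g k.1.1‖ :=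
    tsum_nonneg fun k => mul_nonneg (norm_nonneg _) (norm_nonneg _)
  have hfin_nn : (0:ℝ) ≤ ∑ k ∈ J, ‖f k.1‖ * ‖g k.1‖ :=
    Finset.sum_nonneg fun k _ => mul_nonneg (norm_nonneg _) (norm_nonneg _)
  calc ‖pairing f g‖ ≤ ∑' k : {k : Fin d → ℤ // k ≠ 0}, ‖f k.1‖ * ‖g k.1‖ := hpair
    _ = (∑ k ∈ J, ‖f k.1‖ * ‖g k.1‖)
        + ∑' k : {x : {k : Fin d → ℤ // k ≠ 0} // x ∉ J}, ‖f k.1.1‖ * ‖g k.1.1‖ := hsplit.symm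
    _ ≤ _ := add_le_add hfin htail

lemma ratio_le_one {d : ℕ} {q : ℝ} (hq : 0 < q) {f : (Fin d → ℤ) → ℂ}
    (hfL2 : Summable fun k => ‖f k‖ ^ 2) (J : Finset {k : Fin d → ℤ // k ≠ 0}) :
    Real.sqrt (projNormSq (-q) (J.image Subtype.val) f) / Real.sqrt (sobNormSq (-q) f) ≤ 1 := by
  have hle : projNormSq (-q) (J.image Subtype.val) f ≤ sobNormSq (-q) f := by
    rw [projNormSq, Finset.sum_image (fun x _ y _ h => Subtype.val_injective h), sobNormSq]
    exact Summable.sum_le_tsum J (fun k _ =>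
      mul_nonneg (Real.rpow_nonneg (wt_nonneg _) _) (sq_nonneg _)) (Fq_summable hq hfL2)
  by_cases h : Real.sqrt (sobNormSq (-q) f) = 0
  · rw [h, div_zero]; exact zero_le_one
  · have hpos : 0 < Real.sqrt (sobNormSq (-q) f) :=
      lt_of_le_of_ne (Real.sqrt_nonneg _) (Ne.symm h)
    exact (div_le_one hpos).2 (Real.sqrt_le_sqrt hle)

theorem stmt10 {d : ℕ} (q : ℝ) (hq : 0 < q) (f : ℝ → (Fin d → ℤ) → ℂ)
    (hmz : ∀ t, meanZero (f t))
    (hL2 : ∀ t, Summable fun k => ‖f t k‖ ^ 2)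
    (hpos : ∀ t > (0 : ℝ), 0 < sobNormSq (-q) (f t))
    (htrans : ∀ I : Finset (Fin d → ℤ), (0 : Fin d → ℤ) ∉ I →
      Filter.limsup
        (fun t => Real.sqrt (projNormSq (-q) I (f t)) / Real.sqrt (sobNormSq (-q) (f t)))
        Filter.atTop = 0) :
    ∀ g : (Fin d → ℤ) → ℂ, memSob q g →
      Filter.Tendsto (fun t => ‖pairing (f t) g‖ / Real.sqrt (sobNormSq (-q) (f t)))
        Filter.atTop (nhds 0) := by
  intro g hg
  rw [Metric.tendsto_nhds]
  intro ε hε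
  set Sg := Real.sqrt (sobNormSq q g) with hSgdef
  have hSg : 0 ≤ Sg := Real.sqrt_nonneg _
  have hδ : 0 < ε / (2 * (Sg + 1)) := by positivity
  -- choose a finite set J of nonzero modes capturing most of the H^q mass of g
  have htail0 : Filter.Tendsto (fun J : Finset {k : Fin d → ℤ // k ≠ 0} => tailSq q g J)
      Filter.atTop (nhds 0) :=
    tendsto_tsum_compl_atTop_zero
      (fun k : {k : Fin d → ℤ // k ≠ 0} => wt k.1 ^ (2 * q) * ‖g k.1‖ ^ 2)
  obtain ⟨J, hJ⟩ := (htail0.eventually (gt_mem_nhds (show (0:ℝ) < (ε/2)^2 by positivity))).exists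
  have hsqrt_tail : Real.sqrt (tailSq q g J) < ε / 2 := (Real.sqrt_lt' (by positivity)).2 hJ
  set I := J.image Subtype.val with hIdef
  have h0I : (0 : Fin d → ℤ) ∉ I := by
    intro h
    obtain ⟨a, _, ha⟩ := Finset.mem_image.1 h
    exact a.2 ha
  have hlim := htrans I h0I
  have hbdd : Filter.IsBoundedUnder (· ≤ ·) Filter.atTop
      (fun t => Real.sqrt (projNormSq (-q) I (f t)) / Real.sqrt (sobNormSq (-q) (f t))) :=
    Filter.isBoundedUnder_of ⟨1, fun t => ratio_le_one hq (hL2 t) J⟩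
  have hev : ∀ᶠ t in Filter.atTop,
      Real.sqrt (projNormSq (-q) I (f t)) / Real.sqrt (sobNormSq (-q) (f t))
        < ε / (2 * (Sg + 1)) :=
    Filter.eventually_lt_of_limsup_lt (by rw [hlim]; exact hδ) hbdd
  filter_upwards [hev, Filter.eventually_gt_atTop 0] with t hrt ht
  rw [Real.dist_eq, sub_zero,
    abs_of_nonneg (div_nonneg (norm_nonneg _) (Real.sqrt_nonneg _))]
  have hD : 0 < Real.sqrt (sobNormSq (-q) (f t)) := Real.sqrt_pos.2 (hpos t ht)
  have hkey := key hq (hmz t) (hL2 t) hg J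
  have hr_nn : 0 ≤ Real.sqrt (projNormSq (-q) I (f t)) / Real.sqrt (sobNormSq (-q) (f t)) :=
    div_nonneg (Real.sqrt_nonneg _) (Real.sqrt_nonneg _)
  have h1 : Real.sqrt (projNormSq (-q) I (f t)) / Real.sqrt (sobNormSq (-q) (f t)) * Sg
      ≤ (ε / (2 * (Sg + 1))) * Sg := mul_le_mul_of_nonneg_right hrt.le hSg
  have h2 : (ε / (2 * (Sg + 1))) * Sg ≤ ε / 2 := by
    have h3 : (ε / (2 * (Sg + 1))) * Sg ≤ (ε / (2 * (Sg + 1))) * (Sg + 1) :=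
      mul_le_mul_of_nonneg_left (by linarith) hδ.le
    have h4 : (ε / (2 * (Sg + 1))) * (Sg + 1) = ε / 2 := by
      field_simp
    linarith
  calc ‖pairing (f t) g‖ / Real.sqrt (sobNormSq (-q) (f t))
      ≤ (Real.sqrt (projNormSq (-q) I (f t)) * Sg
          + Real.sqrt (sobNormSq (-q) (f t)) * Real.sqrt (tailSq q g J))
          / Real.sqrt (sobNormSq (-q) (f t)) := by
        gcongr
    _ = Real.sqrt (projNormSq (-q) I (f t)) / Real.sqrt (sobNormSq (-q) (f t)) * Sg
          + Real.sqrt (tailSq q g J) := by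
        field_simp
    _ < ε := by linarith
end

section
/- Fix q > 0 and a, b > 0 with a² + b² = 1, and define f^n_1 = a^n, f^n_{2^ℓ} = a^{n−ℓ} b for 1 ≤ ℓ ≤ n, f^n_k = 0 otherwise. Let ‖f^n‖_{H^{-q}}² = Σ_{k≥1} k^{-2q}|f^n_k|² and P₁ the projection onto mode k = 1. If a > 2^{-q}, then lim_{n→∞} ‖P₁ f^n‖²_{H^{-q}}/‖f^n‖²_{H^{-q}} = (1 + b²/(a²2^{2q}−1))^{-1} > 0 (so f^n is q-recurrent), while if a ≤ 2^{-q} the limit is 0. -/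
/-!
Only the modes `k = 2 ^ ℓ`, `0 ≤ ℓ ≤ n`, carry mass, and with `r = a² 2^{2q}` the weighted norm is
`‖f^n‖² = a^{2n} (1 + b² ∑_{ℓ=1}^n r^{-ℓ})`, so the ratio is `(1 + b² ∑_{ℓ=1}^n r^{-ℓ})⁻¹`.
The threshold `a > 2^{-q}` is exactly `r > 1`: then the geometric sum converges to `1 / (r - 1)`,
while for `r ≤ 1` each term is at least `1`, the sum diverges and the ratio tends to `0`.
-/

open Filter Topology Finset

lemma tendsto_sum_range_inv_pow_succ {r : ℝ} (hr : 1 < r) :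
    Tendsto (fun n ↦ ∑ ℓ ∈ range n, r⁻¹ ^ (ℓ + 1)) atTop (𝓝 (r - 1)⁻¹) := by
  have hgeom := (hasSum_geometric_of_lt_one (inv_nonneg.2 (zero_le_one.trans hr.le))
    (inv_lt_one_of_one_lt₀ hr)).mul_left r⁻¹
  have hval : r⁻¹ * (1 - r⁻¹)⁻¹ = (r - 1)⁻¹ := by
    have : r - 1 ≠ 0 := sub_ne_zero.2 hr.ne'
    field_simp
  rw [hval] at hgeom
  simpa only [← pow_succ'] using hgeom.tendsto_sum_nat

lemma tendsto_sum_range_inv_pow_succ_atTop {r : ℝ} (hr₀ : 0 < r) (hr : r ≤ 1) :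
    Tendsto (fun n ↦ ∑ ℓ ∈ range n, r⁻¹ ^ (ℓ + 1)) atTop atTop := by
  refine tendsto_atTop_mono (fun n ↦ ?_) tendsto_natCast_atTop_atTop
  calc (n : ℝ) = ∑ _ℓ ∈ range n, (1 : ℝ) := by simp
    _ ≤ _ := sum_le_sum fun ℓ _ ↦ one_le_pow₀ (one_le_inv₀ hr₀ |>.2 hr)

lemma tsum_subtype_one_le_eq_sum_two_pow {M : Type*} [AddCommMonoid M] [TopologicalSpace M]
    {g : ℕ → M} (n : ℕ) (hg : ∀ k, (∀ ℓ ≤ n, k ≠ 2 ^ ℓ) → g k = 0) :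
    ∑' k : {k : ℕ // 1 ≤ k}, g k = ∑ ℓ ∈ range (n + 1), g (2 ^ ℓ) := by
  let e : ℕ → {k : ℕ // 1 ≤ k} := fun ℓ ↦ ⟨2 ^ ℓ, Nat.one_le_two_pow⟩
  have he : Function.Injective e := fun x y h ↦
    Nat.pow_right_injective le_rfl (congrArg Subtype.val h)
  rw [tsum_eq_sum (s := (range (n + 1)).image e), sum_image fun x _ y _ h ↦ he h]
  rintro ⟨k, hk⟩ hks
  refine hg k fun ℓ hℓ hkℓ ↦ hks (mem_image.2 ⟨ℓ, mem_range.2 (Nat.lt_succ_of_le hℓ), ?_⟩)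
  exact Subtype.ext hkℓ.symm

lemma Real.pow_rpow_neg {x : ℝ} (hx : 0 ≤ x) (y : ℝ) (n : ℕ) :
    (x ^ n) ^ (-y) = (x ^ y)⁻¹ ^ n := by
  rw [← Real.rpow_pow_comm hx, Real.rpow_neg hx]

lemma one_lt_sq_mul_two_rpow_iff {q a : ℝ} (ha : 0 < a) :
    1 < a ^ 2 * (2 : ℝ) ^ (2 * q) ↔ (2 : ℝ) ^ (-q) < a := by
  have h2q : (0 : ℝ) < 2 ^ q := by positivity
  rw [Real.rpow_neg zero_le_two, inv_lt_iff_one_lt_mul₀ h2q, mul_comm 2 q,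
    Real.rpow_mul zero_le_two, Real.rpow_two, ← mul_pow, one_lt_sq_iff₀ (by positivity)]

lemma tsum_rpow_mul_norm_sq_eq {q a b : ℝ} (ha : a ≠ 0) (n : ℕ) {f : ℕ → ℂ}
    (hf1 : f 1 = (a : ℂ) ^ n)
    (hf2 : ∀ ℓ, 1 ≤ ℓ → ℓ ≤ n → f (2 ^ ℓ) = (a : ℂ) ^ (n - ℓ) * (b : ℂ))
    (hf0 : ∀ k, k ≠ 1 → (∀ ℓ, 1 ≤ ℓ → ℓ ≤ n → k ≠ 2 ^ ℓ) → f k = 0) :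
    ∑' k : {k : ℕ // 1 ≤ k}, (k.1 : ℝ) ^ (-(2 * q)) * ‖f k.1‖ ^ 2
      = (a ^ 2) ^ n * (1 + b ^ 2 * ∑ ℓ ∈ range n, (a ^ 2 * (2 : ℝ) ^ (2 * q))⁻¹ ^ (ℓ + 1)) := by
  have hvanish : ∀ k : ℕ, (∀ ℓ ≤ n, k ≠ 2 ^ ℓ) → (k : ℝ) ^ (-(2 * q)) * ‖f k‖ ^ 2 = 0 := by
    intro k hk
    rw [hf0 k (by simpa using hk 0 (Nat.zero_le n)) fun ℓ _ hℓ ↦ hk ℓ hℓ]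
    simp
  have hterm : ∀ ℓ ∈ range n, ((2 ^ (ℓ + 1) : ℕ) : ℝ) ^ (-(2 * q)) * ‖f (2 ^ (ℓ + 1))‖ ^ 2
      = (a ^ 2) ^ n * b ^ 2 * (a ^ 2 * (2 : ℝ) ^ (2 * q))⁻¹ ^ (ℓ + 1) := by
    intro ℓ hℓ
    have hℓn : ℓ + 1 ≤ n := mem_range.1 hℓ
    rw [hf2 _ (Nat.le_add_left 1 ℓ) hℓn, Nat.cast_pow, Nat.cast_ofNat,
      Real.pow_rpow_neg zero_le_two, norm_mul, norm_pow, Complex.norm_real,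
      Complex.norm_real, Real.norm_eq_abs, Real.norm_eq_abs, mul_pow, ← pow_mul, pow_mul',
      sq_abs, sq_abs, pow_sub₀ _ (pow_ne_zero 2 ha) hℓn, mul_inv, mul_pow]
    ring
  rw [tsum_subtype_one_le_eq_sum_two_pow (g := fun k ↦ (k : ℝ) ^ (-(2 * q)) * ‖f k‖ ^ 2) n
    hvanish, sum_range_succ', sum_congr rfl hterm, ← mul_sum, pow_zero, hf1,
    Nat.cast_one, Real.one_rpow, norm_pow, Complex.norm_real, Real.norm_eq_abs, ← abs_pow, sq_abs]
  ring

theorem stmt17_general (q a b : ℝ) (ha : 0 < a) (hb : 0 < b)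
    (f : ℕ → ℕ → ℂ)
    (hf1 : ∀ n, f n 1 = ((a : ℂ)) ^ n)
    (hf2 : ∀ n ℓ, 1 ≤ ℓ → ℓ ≤ n → f n (2 ^ ℓ) = ((a : ℂ)) ^ (n - ℓ) * (b : ℂ))
    (hf0 : ∀ n k, k ≠ 1 → (∀ ℓ, 1 ≤ ℓ → ℓ ≤ n → k ≠ 2 ^ ℓ) → f n k = 0) :
    ((2 : ℝ) ^ (-q) < a →
      Filter.Tendsto
        (fun n => ‖f n 1‖ ^ 2 /
          ∑' k : {k : ℕ // 1 ≤ k}, ((k.1 : ℝ)) ^ (-(2 * q)) * ‖f n k.1‖ ^ 2)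
        Filter.atTop (nhds (1 + b ^ 2 / (a ^ 2 * (2 : ℝ) ^ (2 * q) - 1))⁻¹) ∧
      0 < (1 + b ^ 2 / (a ^ 2 * (2 : ℝ) ^ (2 * q) - 1))⁻¹) ∧
    (a ≤ (2 : ℝ) ^ (-q) →
      Filter.Tendsto
        (fun n => ‖f n 1‖ ^ 2 /
          ∑' k : {k : ℕ // 1 ≤ k}, ((k.1 : ℝ)) ^ (-(2 * q)) * ‖f n k.1‖ ^ 2)
        Filter.atTop (nhds 0)) := by
  set r := a ^ 2 * (2 : ℝ) ^ (2 * q)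
  have hr₀ : 0 < r := by positivity
  have hratio : (fun n ↦ ‖f n 1‖ ^ 2 /
      ∑' k : {k : ℕ // 1 ≤ k}, ((k.1 : ℝ)) ^ (-(2 * q)) * ‖f n k.1‖ ^ 2)
      = fun n ↦ (1 + b ^ 2 * ∑ ℓ ∈ range n, r⁻¹ ^ (ℓ + 1))⁻¹ := by
    funext n
    rw [tsum_rpow_mul_norm_sq_eq ha.ne' n (hf1 n) (hf2 n) (hf0 n), hf1, norm_pow,
      Complex.norm_real, Real.norm_eq_abs, ← abs_pow, sq_abs, pow_right_comm]
    exact div_mul_cancel_left₀ (by positivity) _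
  rw [hratio]
  refine ⟨fun h ↦ ?_, fun h ↦ ?_⟩
  · have hr : 1 < r := (one_lt_sq_mul_two_rpow_iff ha).2 h
    have hlim : 0 < 1 + b ^ 2 / (r - 1) := by have := sub_pos.2 hr; positivity
    refine ⟨?_, inv_pos.2 hlim⟩
    simpa only [div_eq_mul_inv] using
      (((tendsto_sum_range_inv_pow_succ hr).const_mul (b ^ 2)).const_add 1).inv₀ hlim.ne'
  · have hr : r ≤ 1 := le_of_not_gt fun h' ↦ h.not_gt ((one_lt_sq_mul_two_rpow_iff ha).1 h')
    have hsum := tendsto_sum_range_inv_pow_succ_atTop hr₀ hr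
    exact (tendsto_atTop_add_const_left _ 1
      (hsum.const_mul_atTop (by positivity : 0 < b ^ 2))).inv_tendsto_atTop

theorem stmt17 (q a b : ℝ) (hq : 0 < q) (ha : 0 < a) (hb : 0 < b)
    (hab : a ^ 2 + b ^ 2 = 1)
    (f : ℕ → ℕ → ℂ)
    (hf1 : ∀ n, f n 1 = ((a : ℂ)) ^ n)
    (hf2 : ∀ n ℓ, 1 ≤ ℓ → ℓ ≤ n → f n (2 ^ ℓ) = ((a : ℂ)) ^ (n - ℓ) * (b : ℂ))
    (hf0 : ∀ n k, k ≠ 1 → (∀ ℓ, 1 ≤ ℓ → ℓ ≤ n → k ≠ 2 ^ ℓ) → f n k = 0) :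
    ((2 : ℝ) ^ (-q) < a →
      Filter.Tendsto
        (fun n => ‖f n 1‖ ^ 2 /
          ∑' k : {k : ℕ // 1 ≤ k}, ((k.1 : ℝ)) ^ (-(2 * q)) * ‖f n k.1‖ ^ 2)
        Filter.atTop (nhds (1 + b ^ 2 / (a ^ 2 * (2 : ℝ) ^ (2 * q) - 1))⁻¹) ∧
      0 < (1 + b ^ 2 / (a ^ 2 * (2 : ℝ) ^ (2 * q) - 1))⁻¹) ∧
    (a ≤ (2 : ℝ) ^ (-q) →
      Filter.Tendsto
        (fun n => ‖f n 1‖ ^ 2 /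
          ∑' k : {k : ℕ // 1 ≤ k}, ((k.1 : ℝ)) ^ (-(2 * q)) * ‖f n k.1‖ ^ 2)
        Filter.atTop (nhds 0)) :=
  stmt17_general q a b ha hb f hf1 hf2 hf0
end
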